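/- The lifting of relations to distributions composes: if μ1 ⊑_{R12} μ2 and μ2 ⊑_{R23} μ3, then μ1 ⊑_{R23 ∘ R12} μ3, where R23 ∘ R12 = {(s1,s3) | ∃ s2, (s1,s2) ∈ R12 and (s2,s3) ∈ R23}. -/

import Mathlib

open Classical

structure FDist (S : Type) [Fintype S] where
  pmf : S → ℝ
  nonneg : ∀ s, 0 ≤ pmf s
  sum_one : ∑ s, pmf s = 1

namespace FDist

variable {S S1 S2 : Type} [Fintype S] [Fintype S1] [Fintype S2]

noncomputable def prob (μ : FDist S) (T : Set S) : ℝ :=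
  ∑ s, if s ∈ T then μ.pmf s else 0

def supp (μ : FDist S) : Set S := {s | 0 < μ.pmf s}

noncomputable def dirac (s : S) : FDist S where
  pmf t := if t = s then 1 else 0
  nonneg t := by try dsimp only
                 split <;> norm_num
  sum_one := by simp

noncomputable def prod (μ1 : FDist S1) (μ2 : FDist S2) : FDist (S1 × S2) where
  pmf p := μ1.pmf p.1 * μ2.pmf p.2
  nonneg p := mul_nonneg (μ1.nonneg _) (μ2.nonneg _)
  sum_one := by
    rw [Fintype.sum_prod_type]
    simp_rw [← Finset.mul_sum, μ2.sum_one, mul_one]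
    exact μ1.sum_one

end FDist

/-- Image of a set under a relation: `R(T) = {s2 | ∃ s1 ∈ T, (s1,s2) ∈ R}`. -/
def relImage {S1 S2 : Type} (R : Set (S1 × S2)) (T : Set S1) : Set S2 :=
  {s2 | ∃ s1 ∈ T, (s1, s2) ∈ R}

/-- The lifting `μ1 ⊑_R μ2` of a relation on states to distributions,
via the Hall-type subset condition. -/
def liftRel {S1 S2 : Type} [Fintype S1] [Fintype S2]
    (R : Set (S1 × S2)) (μ1 : FDist S1) (μ2 : FDist S2) : Prop :=
  ∀ T ⊆ μ1.supp, μ1.prob T ≤ μ2.prob (relImage R T)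

/-- A (finite, finitely-branching) labeled probabilistic transition system. -/
structure LPTS (S : Type) (Act : Type) [Fintype S] where
  start : S
  alpha : Set Act
  trans : S → Act → Set (FDist S)
  trans_mem : ∀ s a μ, μ ∈ trans s a → a ∈ alpha
  finite_trans : ∀ s a, (trans s a).Finite

/-- `R` is a strong simulation between `L1` and `L2`. -/
def StrongSim {S1 S2 Act : Type} [Fintype S1] [Fintype S2]
    (L1 : LPTS S1 Act) (L2 : LPTS S2 Act) (R : Set (S1 × S2)) : Prop :=
  ∀ s1 s2, (s1, s2) ∈ R → ∀ a μ1, μ1 ∈ L1.trans s1 a →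
    ∃ μ2 ∈ L2.trans s2 a, liftRel R μ1 μ2

/-- `L2` strongly simulates `L1` (written `L1 ≼ L2`). -/
def Sim {S1 S2 Act : Type} [Fintype S1] [Fintype S2]
    (L1 : LPTS S1 Act) (L2 : LPTS S2 Act) : Prop :=
  ∃ R, StrongSim L1 L2 R ∧ (L1.start, L2.start) ∈ R

namespace FDist

variable {S : Type} [Fintype S]

theorem prob_mono (μ : FDist S) {A B : Set S} (hAB : A ⊆ B) : μ.prob A ≤ μ.prob B := by
  refine Finset.sum_le_sum fun s _ => ?_
  by_cases hA : s ∈ A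
  · simp [hA, hAB hA]
  · simp only [hA, if_false]
    split_ifs
    exacts [μ.nonneg s, le_rfl]

theorem prob_inter_supp (μ : FDist S) (A : Set S) : μ.prob (A ∩ μ.supp) = μ.prob A := by
  refine Finset.sum_congr rfl fun s _ => ?_
  by_cases hs : s ∈ μ.supp
  · simp [hs]
  · have hzero : μ.pmf s = 0 := le_antisymm (not_lt.mp hs) (μ.nonneg s)
    simp [hzero]

end FDist

theorem relImage_mono {S1 S2 : Type} (R : Set (S1 × S2)) {A B : Set S1} (hAB : A ⊆ B) :
    relImage R A ⊆ relImage R B := by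
  rintro s2 ⟨s1, hs1, hR⟩
  exact ⟨s1, hAB hs1, hR⟩

theorem relImage_relImage {S1 S2 S3 : Type} (R12 : Set (S1 × S2)) (R23 : Set (S2 × S3))
    (T : Set S1) :
    relImage R23 (relImage R12 T) =
      relImage {p : S1 × S3 | ∃ s2, (p.1, s2) ∈ R12 ∧ (s2, p.2) ∈ R23} T := by
  ext s3
  constructor
  · rintro ⟨s2, ⟨s1, hs1, h12⟩, h23⟩
    exact ⟨s1, hs1, s2, h12, h23⟩
  · rintro ⟨s1, hs1, s2, h12, h23⟩
    exact ⟨s2, ⟨s1, hs1, h12⟩, h23⟩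

/-- The lifting of relations to distributions composes. -/
theorem liftRel_comp {S1 S2 S3 : Type} [Fintype S1] [Fintype S2] [Fintype S3]
    (R12 : Set (S1 × S2)) (R23 : Set (S2 × S3))
    (μ1 : FDist S1) (μ2 : FDist S2) (μ3 : FDist S3)
    (h12 : liftRel R12 μ1 μ2) (h23 : liftRel R23 μ2 μ3) :
    liftRel {p : S1 × S3 | ∃ s2, (p.1, s2) ∈ R12 ∧ (s2, p.2) ∈ R23} μ1 μ3 := by
  intro T hT
  -- `h23` only applies to subsets of `supp μ2`, and cutting down to the support costs no mass.
  calc μ1.prob T ≤ μ2.prob (relImage R12 T) := h12 T hT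
    _ = μ2.prob (relImage R12 T ∩ μ2.supp) := (μ2.prob_inter_supp _).symm
    _ ≤ μ3.prob (relImage R23 (relImage R12 T ∩ μ2.supp)) := h23 _ Set.inter_subset_right
    _ ≤ μ3.prob (relImage R23 (relImage R12 T)) :=
      μ3.prob_mono (relImage_mono R23 Set.inter_subset_left)
    _ = _ := by rw [relImage_relImage]
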